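/- Let 𝒯 be a locally finite tree (each vertex of finite degree ≥ 2) with directed edges ℰ and vertices 𝒱, and let A be an abelian group. The map φ_s restricted to ℱ₀(ℰ,A) → ℱ(𝒱,A) is surjective when 𝒯 is the (q+1)-regular tree with q ≥ 1; its kernel HC(A) (the group of A-valued harmonic cocycles) thus fits in a short exact sequence 0 → HC(A) → ℱ₀(ℰ,A) → ℱ(𝒱,A) → 0. -/

import Mathlib

/-!
Root the tree at a vertex `r`. Every vertex other than `r` has a unique parent, and a vertex of
degree at least two has a child; choose one child `c v` for every `v`. An antisymmetric `μ` is
then the same as a function `T` on vertices, `T v` being the value of `μ` on the edge from `v`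
to its parent, and `φ_s(μ)(v) = T v - ∑_{w child of v} T w` (with `T r = 0`). Taking `T` zero on
every child `w ≠ c v` and `T (c v) = T v - F v`, defined by recursion on the distance to `r`,
gives `φ_s(μ) = F`.
-/

namespace SimpleGraph

variable {V : Type*} {G : SimpleGraph V}

theorem finsum_mem_dart_fst_eq_sum_neighborFinset [G.LocallyFinite] {M : Type*}
    [AddCommMonoid M] (f : V → V → M) (v : V) :
    ∑ᶠ e ∈ {e : G.Dart | e.fst = v}, f e.fst e.snd = ∑ w ∈ G.neighborFinset v, f v w := by
  have hbij : Set.BijOn (fun e : G.Dart => e.snd) {e | e.fst = v} (G.neighborFinset v) := by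
    refine ⟨?_, ?_, ?_⟩
    · rintro e rfl
      simp [e.adj]
    · rintro e₁ (he₁ : e₁.fst = v) e₂ (he₂ : e₂.fst = v) hsnd
      exact Dart.ext _ _ (Prod.ext (he₁.trans he₂.symm) hsnd)
    · intro w hw
      exact ⟨⟨(v, w), by simpa using hw⟩, rfl, rfl⟩
  rw [finsum_mem_eq_of_bijOn _ hbij (g := f v) (fun e (he : e.fst = v) => by rw [he]),
    finsum_mem_coe_finset]

namespace IsTree

variable (hG : G.IsTree) (r : V)

noncomputable def pathToRoot (v : V) : G.Walk v r := (hG.existsUnique_path v r).choose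

theorem isPath_pathToRoot (v : V) : (hG.pathToRoot r v).IsPath :=
  (hG.existsUnique_path v r).choose_spec.1

theorem eq_pathToRoot {v : V} {p : G.Walk v r} (hp : p.IsPath) : p = hG.pathToRoot r v :=
  (hG.existsUnique_path v r).choose_spec.2 p hp

theorem pathToRoot_root : hG.pathToRoot r r = .nil :=
  (hG.eq_pathToRoot r .nil).symm

noncomputable def parent (v : V) : V := (hG.pathToRoot r v).snd

def IsChild (v w : V) : Prop := w ≠ r ∧ hG.parent r w = v

variable {r}

theorem adj_parent {v : V} (hv : v ≠ r) : G.Adj v (hG.parent r v) :=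
  Walk.adj_snd (Walk.not_nil_of_ne hv)

theorem length_pathToRoot_parent {v : V} (hv : v ≠ r) :
    (hG.pathToRoot r (hG.parent r v)).length + 1 = (hG.pathToRoot r v).length := by
  rw [parent, ← hG.eq_pathToRoot r (hG.isPath_pathToRoot r v).tail]
  exact Walk.length_tail_add_one (Walk.not_nil_of_ne hv)

theorem isChild_parent {v : V} (hv : v ≠ r) : hG.IsChild r (hG.parent r v) v := ⟨hv, rfl⟩

theorem IsChild.adj {v w : V} (h : hG.IsChild r v w) : G.Adj v w :=
  h.2 ▸ (hG.adj_parent h.1).symm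

theorem IsChild.not_isChild {v w : V} (h : hG.IsChild r v w) : ¬ hG.IsChild r w v := by
  rintro ⟨hv, hvw⟩
  have hlen_w := hG.length_pathToRoot_parent h.1
  have hlen_v := hG.length_pathToRoot_parent hv
  rw [h.2] at hlen_w
  rw [hvw] at hlen_v
  omega

theorem isChild_or_isChild_of_adj {v w : V} (h : G.Adj v w) :
    hG.IsChild r v w ∨ hG.IsChild r w v := by
  by_cases hw : w ∈ (hG.pathToRoot r v).support
  · refine .inr ⟨?_, (hG.isAcyclic.eq_snd_of_adj_start (hG.isPath_pathToRoot r v) h hw).symm⟩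
    rintro rfl
    rw [pathToRoot_root, Walk.support_nil, List.mem_singleton] at hw
    exact h.ne' hw
  · refine .inl ⟨fun hwr => hw (hwr ▸ Walk.end_mem_support _), ?_⟩
    have hpath : (Walk.cons h.symm (hG.pathToRoot r v)).IsPath :=
      (Walk.cons_isPath_iff _ _).mpr ⟨hG.isPath_pathToRoot r v, hw⟩
    rw [parent, ← hG.eq_pathToRoot r hpath, Walk.snd_cons]

theorem exists_isChild [G.LocallyFinite] {v : V} (hv : 2 ≤ G.degree v) :
    ∃ w, hG.IsChild r v w := by
  rw [← card_neighborFinset_eq_degree] at hv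
  obtain ⟨w, hw, hne⟩ := Finset.exists_mem_ne hv (hG.parent r v)
  exact ⟨w, (hG.isChild_or_isChild_of_adj ((mem_neighborFinset G v w).mp hw)).resolve_right
    fun h => hne h.2.symm⟩

section Flow

variable {A : Type*} [AddCommGroup A]

variable (r) in
open Classical in
noncomputable def dartFlow (T : V → A) (e : G.Dart) : A :=
  if hG.IsChild r e.snd e.fst then T e.fst else -T e.snd

theorem dartFlow_add_dartFlow_symm (T : V → A) (e : G.Dart) :
    hG.dartFlow r T e + hG.dartFlow r T e.symm = 0 := by
  rcases hG.isChild_or_isChild_of_adj (r := r) e.adj with h | h <;>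
    simp [dartFlow, h, h.not_isChild]

variable (r) in
open Classical in
noncomputable def flowToParent (c : V → V) (F : V → A) (v : V) : A :=
  if v = r then 0
  else if v = c (hG.parent r v) then flowToParent c F (hG.parent r v) - F (hG.parent r v)
  else 0
termination_by (hG.pathToRoot r v).length
decreasing_by exact Nat.lt_of_succ_le (hG.length_pathToRoot_parent ‹_›).le

theorem flowToParent_root (c : V → V) (F : V → A) : hG.flowToParent r c F r = 0 := by
  rw [flowToParent, if_pos rfl]

open Classical in
theorem flowToParent_of_isChild (c : V → V) (F : V → A) {v w : V} (h : hG.IsChild r v w) :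
    hG.flowToParent r c F w = if w = c v then hG.flowToParent r c F v - F v else 0 := by
  rw [flowToParent, if_neg h.1, h.2]

variable [G.LocallyFinite]

variable (r) in
open Classical in
noncomputable def children (v : V) : Finset V := {w ∈ G.neighborFinset v | hG.IsChild r v w}

theorem mem_children {v w : V} : w ∈ hG.children r v ↔ hG.IsChild r v w := by
  classical
  simp only [children, Finset.mem_filter, mem_neighborFinset, and_iff_right_iff_imp]
  exact IsChild.adj hG

theorem filter_isChild_neighborFinset {v : V} (hv : v ≠ r) [DecidablePred (hG.IsChild r · v)] :
    {w ∈ G.neighborFinset v | hG.IsChild r w v} = {hG.parent r v} := by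
  ext w
  rw [Finset.mem_filter, Finset.mem_singleton, mem_neighborFinset]
  constructor
  · exact fun h => h.2.2.symm
  · rintro rfl
    exact ⟨hG.adj_parent hv, hG.isChild_parent hv⟩

theorem finsum_dartFlow {T : V → A} (hT : T r = 0) (v : V) :
    ∑ᶠ e ∈ {e : G.Dart | e.fst = v}, hG.dartFlow r T e =
      T v - ∑ w ∈ hG.children r v, T w := by
  classical
  have hchildren : {w ∈ G.neighborFinset v | ¬ hG.IsChild r w v} = hG.children r v := by
    ext w
    simp only [Finset.mem_filter, mem_neighborFinset, mem_children]
    exact ⟨fun h => (hG.isChild_or_isChild_of_adj h.1).resolve_right h.2,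
      fun h => ⟨h.adj, h.not_isChild⟩⟩
  have hparent : ∑ w ∈ G.neighborFinset v with hG.IsChild r w v, T v = T v := by
    rcases eq_or_ne v r with rfl | hv
    · simp [IsChild, hT]
    · rw [hG.filter_isChild_neighborFinset hv, Finset.sum_singleton]
  calc ∑ᶠ e ∈ {e : G.Dart | e.fst = v}, hG.dartFlow r T e
      = ∑ w ∈ G.neighborFinset v, if hG.IsChild r w v then T v else -T w :=
        finsum_mem_dart_fst_eq_sum_neighborFinset
          (fun v w => if hG.IsChild r w v then T v else -T w) v
    _ = T v - ∑ w ∈ hG.children r v, T w := by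
        rw [Finset.sum_ite, hparent, hchildren, Finset.sum_neg_distrib, sub_eq_add_neg]

theorem sum_children_flowToParent {c : V → V} (hc : ∀ v, hG.IsChild r v (c v)) (F : V → A)
    (v : V) :
    ∑ w ∈ hG.children r v, hG.flowToParent r c F w = hG.flowToParent r c F v - F v := by
  classical
  rw [Finset.sum_congr rfl fun w hw => hG.flowToParent_of_isChild c F (hG.mem_children.mp hw),
    Finset.sum_ite_eq', if_pos (hG.mem_children.mpr (hc v))]

end Flow

theorem exists_antisymm_finsum_dart_fst_eq [G.LocallyFinite] (hG : G.IsTree)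
    (hdeg : ∀ v, 2 ≤ G.degree v) {A : Type*} [AddCommGroup A] (F : V → A) :
    ∃ μ : G.Dart → A, (∀ e, μ e + μ e.symm = 0) ∧
      ∀ v, ∑ᶠ e ∈ {e : G.Dart | e.fst = v}, μ e = F v := by
  obtain ⟨r⟩ := hG.connected.nonempty
  choose c hc using fun v => hG.exists_isChild (r := r) (hdeg v)
  refine ⟨hG.dartFlow r (hG.flowToParent r c F), hG.dartFlow_add_dartFlow_symm _, fun v => ?_⟩
  rw [hG.finsum_dartFlow (hG.flowToParent_root c F), hG.sum_children_flowToParent hc,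
    sub_sub_cancel]

end IsTree
end SimpleGraph

/-- Let `𝒯` be the `(q+1)`-regular tree, `q ≥ 1`, with directed edges the darts, and `A` an
abelian group.  The degeneracy map `φ_s : ℱ₀(ℰ,A) → ℱ(𝒱,A)`, `φ_s(μ)(v) = Σ_{s(e)=v} μ(e)`,
restricted to functions `μ` on directed edges with `μ(e) + μ(ē) = 0`, is surjective.  Its
kernel `HC(A)`, the group of `A`-valued harmonic cocycles, thus fits in a short exact
sequence `0 → HC(A) → ℱ₀(ℰ,A) → ℱ(𝒱,A) → 0`. -/
theorem source_degeneracy_surjective_on_regular_tree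
    {V : Type*} (G : SimpleGraph V) [G.LocallyFinite] (q : ℕ) (hq : 1 ≤ q)
    (htree : G.IsTree) (hreg : G.IsRegularOfDegree (q + 1))
    (A : Type*) [AddCommGroup A] (F : V → A) :
    ∃ μ : G.Dart → A, (∀ e : G.Dart, μ e + μ e.symm = 0) ∧
      ∀ v : V, ∑ᶠ e ∈ {e : G.Dart | e.fst = v}, μ e = F v :=
  htree.exists_antisymm_finsum_dart_fst_eq (fun v => by rw [hreg v]; omega) F
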